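/- Let E8 = { [[0,1],[2,1]], [[0,2],[1,1]], [[1,1],[2,0]], [[1,2],[1,0]], [[2,0],[1,2]], [[2,0],[2,2]], [[2,1],[0,2]], [[2,2],[0,2]] } over GF(3). Then for every Y ∈ E8, exactly three of the eight matrices Y' ∈ E8 satisfy rank(Y + Y') = 1; in particular there are exactly 24 ordered pairs (R,S) ∈ E8 × E8 with rank(R + S) = 1. -/

import Mathlib

/-! Over a field, a `2 × 2` matrix has rank one exactly when it is nonzero and singular, which
turns the first claim into a finite computation over `GF(3)`. The second claim is then a double
count: a relation on eight elements in which every element has exactly three partners has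
`8 * 3 = 24` related ordered pairs. -/

open Matrix

abbrev F3 := ZMod 3

/-- The eight special matrices of `GL(2,3)`. -/
def E8 : Set (Matrix (Fin 2) (Fin 2) F3) :=
  {!![0, 1; 2, 1], !![0, 2; 1, 1], !![1, 1; 2, 0], !![1, 2; 1, 0],
   !![2, 0; 1, 2], !![2, 0; 2, 2], !![2, 1; 0, 2], !![2, 2; 0, 2]}

section Rank

variable {K m n : Type*} [Field K] [Fintype n]

theorem Matrix.rank_eq_zero_iff (A : Matrix m n K) : A.rank = 0 ↔ A = 0 := by
  classical
  rw [Matrix.rank, Submodule.finrank_eq_zero, LinearMap.range_eq_bot, ← Matrix.toLin'_apply',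
    LinearEquiv.map_eq_zero_iff]

theorem Matrix.rank_lt_card_iff_det_eq_zero [DecidableEq n] (A : Matrix n n K) :
    A.rank < Fintype.card n ↔ A.det = 0 := by
  have rank_nullity := LinearMap.finrank_range_add_finrank_ker A.mulVecLin
  rw [Module.finrank_fintype_fun_eq_card] at rank_nullity
  have ker_ne_bot : 0 < Module.finrank K (LinearMap.ker A.mulVecLin) ↔ ∃ v ≠ 0, A *ᵥ v = 0 := by
    simp only [Nat.pos_iff_ne_zero, Ne, Submodule.finrank_eq_zero,
      Matrix.ker_mulVecLin_eq_bot_iff, not_forall, exists_prop, and_comm]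
  rw [← Matrix.exists_mulVec_eq_zero_iff, ← ker_ne_bot, Matrix.rank]
  omega

theorem Matrix.rank_eq_one_iff_of_fin_two (A : Matrix (Fin 2) (Fin 2) K) :
    A.rank = 1 ↔ A ≠ 0 ∧ A.det = 0 := by
  rw [Ne, ← A.rank_eq_zero_iff, ← A.rank_lt_card_iff_det_eq_zero, Fintype.card_fin]
  omega

end Rank

theorem Set.ncard_rel_pairs_eq_mul {α : Type*} {s : Set α} (hs : s.Finite) (r : α → α → Prop)
    {k : ℕ} (h : ∀ x ∈ s, {y ∈ s | r x y}.ncard = k) :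
    {p : α × α | p.1 ∈ s ∧ p.2 ∈ s ∧ r p.1 p.2}.ncard = s.ncard * k := by
  classical
  lift s to Finset α using hs
  have pairs_eq : {p : α × α | p.1 ∈ (s : Set α) ∧ p.2 ∈ (s : Set α) ∧ r p.1 p.2} =
      ↑((s ×ˢ s).filter fun p => r p.1 p.2) := by
    ext
    simp [and_assoc]
  rw [pairs_eq, Set.ncard_coe_finset, Set.ncard_coe_finset, Finset.card_filter,
    Finset.sum_product]
  refine Finset.sum_const_nat fun x hx => ?_
  rw [← h x hx, ← Finset.card_filter, ← Set.ncard_coe_finset, Finset.coe_filter]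
  rfl

instance : Fintype E8 := by
  unfold E8
  infer_instance

theorem E8_ncard : E8.ncard = 8 := by
  rw [Set.ncard_eq_toFinset_card']
  decide

theorem E8_ncard_nonzero_singular_sums {Y : Matrix (Fin 2) (Fin 2) F3} (hY : Y ∈ E8) :
    {Y' ∈ E8 | Y + Y' ≠ 0 ∧ (Y + Y').det = 0}.ncard = 3 := by
  rw [Set.ncard_eq_toFinset_card']
  simp only [E8, Set.mem_insert_iff, Set.mem_singleton_iff] at hY
  rcases hY with rfl | rfl | rfl | rfl | rfl | rfl | rfl | rfl <;> decide

/-- For every `Y ∈ E8`, exactly three of the eight matrices `Y' ∈ E8`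
satisfy `rank (Y + Y') = 1`; in particular there are exactly 24 ordered pairs
`(R, S) ∈ E8 × E8` with `rank (R + S) = 1`. -/
theorem stmt3 :
    (∀ Y ∈ E8, {Y' ∈ E8 | (Y + Y').rank = 1}.ncard = 3) ∧
    {p : Matrix (Fin 2) (Fin 2) F3 × Matrix (Fin 2) (Fin 2) F3 |
      p.1 ∈ E8 ∧ p.2 ∈ E8 ∧ (p.1 + p.2).rank = 1}.ncard = 24 := by
  have three_partners : ∀ Y ∈ E8, {Y' ∈ E8 | (Y + Y').rank = 1}.ncard = 3 := by
    simp_rw [Matrix.rank_eq_one_iff_of_fin_two]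
    exact fun Y hY => E8_ncard_nonzero_singular_sums hY
  refine ⟨three_partners, ?_⟩
  rw [Set.ncard_rel_pairs_eq_mul E8.toFinite (fun R S => (R + S).rank = 1) three_partners,
    E8_ncard]
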